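/- arXiv:1605.03152 — 3 statements merged into one kernel-verified Lean document; each statement's English description precedes it below -/
import Mathlib

section
/- Let (D, d, f) be an MCO with d ≥ 2 and let w ∈ W_d have w_i > 0 for every i. If no two distinct Pareto-optimal solutions of the MCO are weakly-equivalent, then the minimizer of the linearization by w is unique: there is exactly one x ∈ D with ⟨f(x), w⟩ = min_{y ∈ D} ⟨f(y), w⟩. -/
open Finset

/-- Membership in the weight set `W_d`: each coordinate is in `[0,1)` and coordinates sum to 1. -/
def memW (d : ℕ) (w : Fin d → ℝ) : Prop :=
  (∀ i, 0 ≤ w i ∧ w i < 1) ∧ (∑ i, w i) = 1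

/-- Linearization `⟨f(x), w⟩ = ∑ i, w i * f x i`. -/
def lin {D : Type} {d : ℕ} (f : D → Fin d → ℝ) (w : Fin d → ℝ) (x : D) : ℝ :=
  ∑ i, w i * f x i

/-- `x` is a Pareto-optimal solution: no `y` dominates it strictly. -/
def ParetoOpt {D : Type} {d : ℕ} (f : D → Fin d → ℝ) (x : D) : Prop :=
  ¬ ∃ y : D, (∀ i, f y i ≤ f x i) ∧ f y ≠ f x

/-- The `ℓ₁` norm of a vector in `ℝ^d`. -/
def l1norm {d : ℕ} (v : Fin d → ℝ) : ℝ := ∑ i, |v i|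

/-- The MCO `(D, d, f)` is normal. -/
def NormalMCO {D : Type} {d : ℕ} (f : D → Fin d → ℝ) : Prop :=
  (∀ i : Fin d, ∃! x : D, f x i = 0) ∧
  (∀ (i j : Fin d) (x y : D), i ≠ j → f x i = 0 → f y j = 0 → x ≠ y)

/-- The MCO `(D, d, f)` is collision-free with gap vector `lam`. -/
def CollisionFree {D : Type} {d : ℕ} (f : D → Fin d → ℝ) (lam : Fin d → ℝ) : Prop :=
  ∀ (i : Fin d) (x y : D), x ≠ y → lam i < |f x i - f y i|

/-! A minimizer of a linearization with strictly positive weights is Pareto-optimal, since a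
strictly dominating solution would have a strictly smaller linearization. So two distinct
minimizers would be distinct Pareto-optimal solutions that are weakly-equivalent via `w`. -/

section Linearization

variable {D : Type} {d : ℕ} {f : D → Fin d → ℝ} {w : Fin d → ℝ}

theorem lin_lt_lin_of_dominates (hwpos : ∀ i, 0 < w i) {x y : D}
    (hle : ∀ i, f y i ≤ f x i) (hne : f y ≠ f x) : lin f w y < lin f w x := by
  obtain ⟨i, hi⟩ := Function.ne_iff.mp hne
  refine Finset.sum_lt_sum (fun j _ => mul_le_mul_of_nonneg_left (hle j) (hwpos j).le)
    ⟨i, Finset.mem_univ i, mul_lt_mul_of_pos_left ((hle i).lt_of_ne hi) (hwpos i)⟩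

theorem paretoOpt_of_forall_lin_le (hwpos : ∀ i, 0 < w i) {x : D}
    (hx : ∀ y, lin f w x ≤ lin f w y) : ParetoOpt f x := by
  rintro ⟨y, hle, hne⟩
  exact (lin_lt_lin_of_dominates hwpos hle hne).not_ge (hx y)

end Linearization

theorem stmt_9_general {D : Type} [Fintype D] [Nonempty D] {d : ℕ}
    (f : D → Fin d → ℝ)
    (w : Fin d → ℝ) (hw : memW d w) (hwpos : ∀ i, 0 < w i)
    (hnwe : ∀ x y : D, ParetoOpt f x → ParetoOpt f y → x ≠ y →
      ¬ ∃ v : Fin d → ℝ, memW d v ∧ lin f v x = lin f v y) :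
    ∃! x : D, ∀ y : D, lin f w x ≤ lin f w y := by
  obtain ⟨x, hx⟩ := Finite.exists_min (lin f w)
  refine ⟨x, hx, fun y hy => ?_⟩
  by_contra hyx
  exact hnwe y x (paretoOpt_of_forall_lin_le hwpos hy) (paretoOpt_of_forall_lin_le hwpos hx) hyx
    ⟨w, hw, (hy x).antisymm (hx y)⟩

theorem stmt_9 {D : Type} [Fintype D] [Nonempty D] {d : ℕ} (hd : 2 ≤ d)
    (f : D → Fin d → ℝ) (hf : ∀ x i, 0 ≤ f x i)
    (w : Fin d → ℝ) (hw : memW d w) (hwpos : ∀ i, 0 < w i)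
    (hnwe : ∀ x y : D, ParetoOpt f x → ParetoOpt f y → x ≠ y →
      ¬ ∃ v : Fin d → ℝ, memW d v ∧ lin f v x = lin f v y) :
    ∃! x : D, ∀ y : D, lin f w x ≤ lin f w y :=
  stmt_9_general f w hw hwpos hnwe
end

section
/- Let (D, d, f) be an MCO, let m ∈ ℝ satisfy f_i(y) ≤ m for every y ∈ D and every index i, let ε ≥ 0, and let w, w′ ∈ W_d with ‖w − w′‖₁ ≤ ε. If x, y ∈ D satisfy ⟨f(y), w⟩ − ⟨f(x), w⟩ > 2·m·d·ε, then ⟨f(y), w′⟩ > ⟨f(x), w′⟩; that is, a strict linearized ordering with margin exceeding 2mdε is preserved under any ℓ₁-perturbation of the weight vector of size at most ε. -/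
/-!
Replacing the weights `w` by `w'` moves every linearization by at most `m ‖w - w'‖₁ ≤ m ε`,
so a gap exceeding `2 m ε` cannot be reversed; for `d ≥ 1` and `m ≥ 0` this is implied by
the margin `2 m d ε`.
-/

open Finset

section Perturbation

variable {D : Type} {d : ℕ} (f : D → Fin d → ℝ)

theorem lin_sub_lin (w w' : Fin d → ℝ) (z : D) :
    lin f w z - lin f w' z = ∑ i, (w i - w' i) * f z i := by
  simp only [lin, ← Finset.sum_sub_distrib, sub_mul]

theorem abs_lin_sub_lin_le {m : ℝ} {z : D} (hbound : ∀ i, |f z i| ≤ m) (w w' : Fin d → ℝ) :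
    |lin f w z - lin f w' z| ≤ m * l1norm (fun i => w i - w' i) := by
  rw [lin_sub_lin, l1norm, Finset.mul_sum]
  calc |∑ i, (w i - w' i) * f z i| ≤ ∑ i, |(w i - w' i) * f z i| :=
        Finset.abs_sum_le_sum_abs _ _
    _ ≤ ∑ i, m * |w i - w' i| := by
        gcongr with i
        rw [abs_mul, mul_comm]
        exact mul_le_mul_of_nonneg_right (hbound i) (abs_nonneg _)

theorem lin_lt_lin_of_two_mul_l1norm_lt {m : ℝ} (hbound : ∀ z i, |f z i| ≤ m)
    {w w' : Fin d → ℝ} {x y : D}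
    (hmargin : 2 * m * l1norm (fun i => w i - w' i) < lin f w y - lin f w x) :
    lin f w' x < lin f w' y := by
  have hx := abs_le.mp (abs_lin_sub_lin_le f (hbound x) w w')
  have hy := abs_le.mp (abs_lin_sub_lin_le f (hbound y) w w')
  linarith [hx.1, hy.2]

end Perturbation

theorem stmt_11_general {D : Type} {d : ℕ}
    (f : D → Fin d → ℝ) (hf : ∀ x i, 0 ≤ f x i)
    (m : ℝ) (hm : ∀ (y : D) (i : Fin d), f y i ≤ m)
    (ε : ℝ) (hε : 0 ≤ ε)
    (w w' : Fin d → ℝ)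
    (hclose : l1norm (fun i => w i - w' i) ≤ ε)
    (x y : D) (hmargin : 2 * m * d * ε < lin f w y - lin f w x) :
    lin f w' x < lin f w' y := by
  have hd : 0 < d := by
    refine Nat.pos_of_ne_zero fun hd => ?_
    subst hd
    simp [lin] at hmargin
  have hbound : ∀ z i, |f z i| ≤ m := fun z i =>
    abs_le.mpr ⟨by linarith [hf z i, hm z i], hm z i⟩
  have hm0 : 0 ≤ m := (abs_nonneg _).trans (hbound x ⟨0, hd⟩)
  have hd1 : (1 : ℝ) ≤ d := by exact_mod_cast hd
  have hgap : 2 * m * l1norm (fun i => w i - w' i) < lin f w y - lin f w x :=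
    calc 2 * m * l1norm (fun i => w i - w' i) ≤ 2 * m * ε := by gcongr
      _ ≤ 2 * m * d * ε := by nlinarith [mul_nonneg hm0 hε]
      _ < _ := hmargin
  exact lin_lt_lin_of_two_mul_l1norm_lt f hbound hgap

theorem stmt_11 {D : Type} [Fintype D] [Nonempty D] {d : ℕ}
    (f : D → Fin d → ℝ) (hf : ∀ x i, 0 ≤ f x i)
    (m : ℝ) (hm : ∀ (y : D) (i : Fin d), f y i ≤ m)
    (ε : ℝ) (hε : 0 ≤ ε)
    (w w' : Fin d → ℝ) (hw : memW d w) (hw' : memW d w')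
    (hclose : l1norm (fun i => w i - w' i) ≤ ε)
    (x y : D) (hmargin : 2 * m * d * ε < lin f w y - lin f w x) :
    lin f w' x < lin f w' y :=
  stmt_11_general f hf m hm ε hε w w' hclose x y hmargin
end

section
/- Let (D, d, f) be a normal MCO with d ≥ 2 that is collision-free with gap vector λ, in which no two distinct Pareto-optimal solutions are equivalent, and let m = max over x ∈ D and indices i of f_i(x). Let w ∈ W_d have w_i > 0 for every i, and suppose the minimum of the linearization y ↦ ⟨f(y), w⟩ over D is attained at two or more points. Then there exists w′ ∈ W_d with ‖w − w′‖₁ ≤ ⟨λ, w⟩/(m·d) such that the linearization y ↦ ⟨f(y), w′⟩ attains its minimum over D at exactly one point, and this unique minimizer is one of the minimizers of the linearization by w. -/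
open Finset

/-!
Tilt `w` slightly towards a vertex `e_i` of the simplex with `w_i > 0`, i.e. take
`w' = (1 - t) w + t e_i`, so that `⟨f(y), w'⟩ = (1 - t) ⟨f(y), w⟩ + t f_i(y)`.
For small `t > 0` the new objective still prefers the `w`-minimizers to every other point
(finitely many values leave a positive gap above the minimum), and among the `w`-minimizers it
selects the one with the smallest `f_i`, which is unique because collision-freeness makes `f_i`
injective. Since each coordinate moves by at most `t`, taking `t ≤ ⟨λ, w⟩ / (m d²)` gives the
`ℓ₁` bound; here `m > 0` (so the bound is not `x / 0 = 0`) because the two given minimizers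
have distinct `f_i`.
-/

open Finset Filter Topology

theorem exists_pos_gap_above {α : Type*} [Finite α] [Nonempty α] (g : α → ℝ) (a : ℝ) :
    ∃ γ > 0, ∀ z, a < g z → a + γ ≤ g z := by
  classical
  let excess z := if a < g z then g z - a else 1
  obtain ⟨z₀, hz₀⟩ := Finite.exists_min excess
  refine ⟨excess z₀, ?_, fun z hz => ?_⟩
  · simp only [excess]
    split_ifs with h <;> linarith
  · have := hz₀ z
    simp only [excess, if_pos hz] at this
    linarith

theorem eventually_forall_ne_lt_of_lex_min {α : Type*} [Finite α] {g h : α → ℝ} {x : α}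
    (hmin : ∀ y, g x ≤ g y) (htie : ∀ y ≠ x, g y = g x → h x < h y) :
    ∀ᶠ t in 𝓝[>] (0 : ℝ), ∀ y ≠ x, (1 - t) * g x + t * h x < (1 - t) * g y + t * h y := by
  have : Nonempty α := ⟨x⟩
  obtain ⟨γ, hγ, hgap⟩ := exists_pos_gap_above g (g x)
  obtain ⟨y₀, hy₀⟩ := Finite.exists_min h
  set B := h x - h y₀
  have hB : 0 ≤ B := sub_nonneg.2 (hy₀ x)
  filter_upwards [Ioo_mem_nhdsGT (show (0 : ℝ) < γ / (γ + B) by positivity)]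
    with t ⟨ht₀, ht⟩ y hyx
  rw [lt_div_iff₀ (by positivity)] at ht
  rcases (hmin y).eq_or_lt with hxy | hxy
  · nlinarith [htie y hyx hxy.symm]
  · have ht₁ : t < 1 := by nlinarith
    nlinarith [mul_le_mul_of_nonneg_left (hgap y hxy) (sub_nonneg.2 ht₁.le), hy₀ y]

theorem exists_min_lt_of_injective {α : Type*} [Finite α] [Nonempty α] (g h : α → ℝ)
    (hh : Function.Injective h) : ∃ x, (∀ y, g x ≤ g y) ∧ ∀ y ≠ x, g y = g x → h x < h y := by
  obtain ⟨x₀, hx₀⟩ := Finite.exists_min g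
  obtain ⟨x, hx, hxh⟩ := Set.exists_min_image {x | ∀ y, g x ≤ g y} h (Set.toFinite _) ⟨x₀, hx₀⟩
  refine ⟨x, hx, fun y hyx hyg => ?_⟩
  have hy : ∀ z, g y ≤ g z := fun z => hyg ▸ hx z
  exact (hxh y hy).lt_of_ne (hh.ne hyx.symm)

theorem CollisionFree.injective {D : Type} {d : ℕ} {f : D → Fin d → ℝ} {lam : Fin d → ℝ}
    (hcf : CollisionFree f lam) {i : Fin d} (hi : 0 ≤ lam i) : Function.Injective (f · i) := by
  intro x y hxy
  by_contra hne
  have := hcf i x y hne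
  simp only at hxy
  rw [hxy, sub_self, abs_zero] at this
  linarith

theorem memW.exists_pos {d : ℕ} {w : Fin d → ℝ} (hw : memW d w) : ∃ i, 0 < w i := by
  obtain ⟨i, -, hi⟩ := exists_lt_of_sum_lt (f := 0) (g := w) (s := univ) (by simp [hw.2])
  exact ⟨i, hi⟩

noncomputable def tiltWeight {d : ℕ} (w : Fin d → ℝ) (i : Fin d) (t : ℝ) : Fin d → ℝ :=
  (1 - t) • w + t • Pi.single i 1

theorem tiltWeight_apply {d : ℕ} (w : Fin d → ℝ) (i j : Fin d) (t : ℝ) :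
    tiltWeight w i t j = (1 - t) * w j + t * (Pi.single i 1 : Fin d → ℝ) j := rfl

theorem lin_tiltWeight {D : Type} {d : ℕ} (f : D → Fin d → ℝ) (w : Fin d → ℝ) (i : Fin d)
    (t : ℝ) (z : D) : lin f (tiltWeight w i t) z = (1 - t) * lin f w z + t * f z i := by
  simp only [lin, tiltWeight_apply, add_mul, sum_add_distrib, mul_assoc, ← mul_sum,
    Pi.single_apply, ite_mul, one_mul, zero_mul, sum_ite_eq', mem_univ, if_true]

theorem memW_tiltWeight {d : ℕ} {w : Fin d → ℝ} (hw : memW d w) (i : Fin d) {t : ℝ}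
    (ht₀ : 0 ≤ t) (ht₁ : t < 1) : memW d (tiltWeight w i t) := by
  refine ⟨fun j => ?_, ?_⟩
  · obtain ⟨hw₀, hw₁⟩ := hw.1 j
    have he₀ : (0 : ℝ) ≤ (Pi.single i 1 : Fin d → ℝ) j := by
      rw [Pi.single_apply]; split_ifs <;> norm_num
    have he₁ : (Pi.single i 1 : Fin d → ℝ) j ≤ 1 := by
      rw [Pi.single_apply]; split_ifs <;> norm_num
    rw [tiltWeight_apply]
    constructor <;> nlinarith
  · simp only [tiltWeight_apply, sum_add_distrib, ← mul_sum, hw.2, sum_pi_single', mem_univ,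
      if_true]
    ring

theorem l1norm_sub_tiltWeight_le {d : ℕ} {w : Fin d → ℝ} (hw : memW d w) (i : Fin d) {t : ℝ}
    (ht : 0 ≤ t) : l1norm (fun j => w j - tiltWeight w i t j) ≤ t * d := by
  have hcoord : ∀ j, |w j - tiltWeight w i t j| ≤ t := fun j => by
    obtain ⟨hw₀, hw₁⟩ := hw.1 j
    have hdiff : |w j - (Pi.single i 1 : Fin d → ℝ) j| ≤ 1 := by
      rw [abs_le, Pi.single_apply]; split_ifs <;> constructor <;> linarith
    have hsub : w j - tiltWeight w i t j = t * (w j - (Pi.single i 1 : Fin d → ℝ) j) := by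
      rw [tiltWeight_apply]; ring
    calc |w j - tiltWeight w i t j| = t * |w j - (Pi.single i 1 : Fin d → ℝ) j| := by
          rw [hsub, abs_mul, abs_of_nonneg ht]
      _ ≤ t := mul_le_of_le_one_right ht hdiff
  calc l1norm (fun j => w j - tiltWeight w i t j) ≤ ∑ _j : Fin d, t :=
        sum_le_sum fun j _ => hcoord j
    _ = t * d := by simp [mul_comm]

theorem stmt_13_general {D : Type} [Fintype D] {d : ℕ}
    (f : D → Fin d → ℝ) (hf : ∀ x i, 0 ≤ f x i)
    (lam : Fin d → ℝ) (hlam : ∀ i, 0 < lam i)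
    (hcf : CollisionFree f lam)
    (m : ℝ) (hm : IsGreatest {r : ℝ | ∃ (x : D) (i : Fin d), f x i = r} m)
    (w : Fin d → ℝ) (hw : memW d w)
    (hdeg : ∃ x y : D, x ≠ y ∧ (∀ z : D, lin f w x ≤ lin f w z) ∧
      (∀ z : D, lin f w y ≤ lin f w z)) :
    ∃ (w' : Fin d → ℝ) (x : D), memW d w' ∧
      l1norm (fun i => w i - w' i) ≤ (∑ i, w i * lam i) / (m * d) ∧
      (∀ y : D, lin f w' x ≤ lin f w' y) ∧
      (∀ y : D, (∀ z : D, lin f w' y ≤ lin f w' z) → y = x) ∧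
      (∀ y : D, lin f w x ≤ lin f w y) := by
  obtain ⟨x₀, y₀, hxy₀, -, -⟩ := hdeg
  have : Nonempty D := ⟨x₀⟩
  obtain ⟨i, hwi⟩ := hw.exists_pos
  have hinj := hcf.injective (hlam i).le
  have hm_pos : 0 < m := by
    rcases (hinj.ne hxy₀).lt_or_gt with h | h <;>
      linarith [hf x₀ i, hf y₀ i, hm.2 ⟨x₀, i, rfl⟩, hm.2 ⟨y₀, i, rfl⟩]
  set S := ∑ j, w j * lam j
  have hS : 0 < S :=
    sum_pos' (fun j _ => mul_nonneg (hw.1 j).1 (hlam j).le) ⟨i, mem_univ i, mul_pos hwi (hlam i)⟩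
  have hd_pos : (0 : ℝ) < d := Nat.cast_pos.2 (Fin.pos i)
  obtain ⟨x, hx_min, hx_tie⟩ := exists_min_lt_of_injective (lin f w) (fun y => f y i) hinj
  have ht_max : (0 : ℝ) < min 1 (S / (m * d) / d) := lt_min one_pos (by positivity)
  obtain ⟨t, hx_strict, ht₀, ht⟩ :=
    ((eventually_forall_ne_lt_of_lex_min (h := fun y => f y i) hx_min hx_tie).and
      (Ioo_mem_nhdsGT ht_max)).exists
  have hlt : ∀ y ≠ x, lin f (tiltWeight w i t) x < lin f (tiltWeight w i t) y := by
    simpa only [lin_tiltWeight] using hx_strict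
  refine ⟨tiltWeight w i t, x, memW_tiltWeight hw i ht₀.le (ht.trans_le (min_le_left _ _)),
    (l1norm_sub_tiltWeight_le hw i ht₀.le).trans
      ((le_div_iff₀ hd_pos).1 (ht.le.trans (min_le_right _ _))),
    fun y => (eq_or_ne y x).elim (fun h => h ▸ le_rfl) (fun h => (hlt y h).le),
    fun y hy => by_contra fun h => (hy x).not_gt (hlt y h), hx_min⟩

theorem stmt_13 {D : Type} [Fintype D] [Nonempty D] {d : ℕ} (hd : 2 ≤ d)
    (f : D → Fin d → ℝ) (hf : ∀ x i, 0 ≤ f x i)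
    (lam : Fin d → ℝ) (hlam : ∀ i, 0 < lam i)
    (hnorm : NormalMCO f) (hcf : CollisionFree f lam)
    (hneq : ∀ x y : D, ParetoOpt f x → ParetoOpt f y → f x = f y → x = y)
    (m : ℝ) (hm : IsGreatest {r : ℝ | ∃ (x : D) (i : Fin d), f x i = r} m)
    (w : Fin d → ℝ) (hw : memW d w) (hwpos : ∀ i, 0 < w i)
    (hdeg : ∃ x y : D, x ≠ y ∧ (∀ z : D, lin f w x ≤ lin f w z) ∧
      (∀ z : D, lin f w y ≤ lin f w z)) :
    ∃ (w' : Fin d → ℝ) (x : D), memW d w' ∧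
      l1norm (fun i => w i - w' i) ≤ (∑ i, w i * lam i) / (m * d) ∧
      (∀ y : D, lin f w' x ≤ lin f w' y) ∧
      (∀ y : D, (∀ z : D, lin f w' y ≤ lin f w' z) → y = x) ∧
      (∀ y : D, lin f w x ≤ lin f w y) :=
  stmt_13_general f hf lam hlam hcf m hm w hw hdeg
end
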